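/- Let δ > d > 0 be integers, γ > 0 an integer, A ≥ 0, B > d integers, and define A_n = γ_n − (γ − A) d^{n-1} and B_n = B d^{n-1}, where γ_n = γ Σ_{i=0}^{n-1} δ^{n-1-i} d^i. If (B − d)/(γ − A) > (δ − d)/γ (with γ > A), then for all n ≥ 1: (B_n − d^n)/(γ_n − A_n) = (B − d)/(γ − A) > (δ^n − d^n)/γ_n; in particular δ^n is strictly smaller than the y-intercept of the line through (γ_n, d^n) and (A_n, B_n). -/

import Mathlib

/-! Neither slope depends on `n`. The vector from `(γₙ, dⁿ)` to `(Aₙ, Bₙ)` is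
`dⁿ⁻¹ • (A - γ, B - d)`, and `δⁿ - dⁿ = (δ - d) ∑ δⁿ⁻¹⁻ⁱ dⁱ` while `γₙ = γ ∑ δⁿ⁻¹⁻ⁱ dⁱ`. -/

open Finset

theorem sub_mul_sum_pow_mul_pow {R : Type*} [CommRing R] (x y : R) (n : ℕ) :
    (x - y) * ∑ i ∈ range n, x ^ (n - 1 - i) * y ^ i = x ^ n - y ^ n := by
  simp_rw [mul_comm (x ^ _) (y ^ _)]
  rw [geom_sum₂_comm, mul_comm, geom_sum₂_mul]

theorem sum_pow_mul_pow_pos {R : Type*} [Semiring R] [PartialOrder R] [IsStrictOrderedRing R]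
    {x y : R} (hx : 0 < x) (hy : 0 < y) {n : ℕ} (hn : n ≠ 0) :
    0 < ∑ i ∈ range n, x ^ (n - 1 - i) * y ^ i :=
  sum_pos (fun _ _ ↦ by positivity) (nonempty_range_iff.mpr hn)

theorem pow_sub_pow_div_mul_sum {K : Type*} [Field K] (x y c : K) {n : ℕ}
    (hS : ∑ i ∈ range n, x ^ (n - 1 - i) * y ^ i ≠ 0) :
    (x ^ n - y ^ n) / (c * ∑ i ∈ range n, x ^ (n - 1 - i) * y ^ i) = (x - y) / c := by
  rw [← sub_mul_sum_pow_mul_pow, mul_div_mul_right _ _ hS]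

theorem stmt_18_general (δ d γ A B : ℤ) (hd : 0 < d) (hδd : d < δ) (hγ : 0 < γ)
    (hslope : ((δ : ℝ) - d) / γ < ((B : ℝ) - d) / ((γ : ℝ) - A)) :
    ∀ n : ℕ, 1 ≤ n →
      (((B * d ^ (n - 1) : ℤ) : ℝ) - (d : ℝ) ^ n) /
          (((γ * ∑ i ∈ Finset.range n, δ ^ (n - 1 - i) * d ^ i : ℤ) : ℝ) -
            (((γ * ∑ i ∈ Finset.range n, δ ^ (n - 1 - i) * d ^ i - (γ - A) * d ^ (n - 1) : ℤ)) : ℝ))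
        = ((B : ℝ) - d) / ((γ : ℝ) - A) ∧
      ((δ : ℝ) ^ n - (d : ℝ) ^ n) / ((γ * ∑ i ∈ Finset.range n, δ ^ (n - 1 - i) * d ^ i : ℤ) : ℝ)
        < ((B : ℝ) - d) / ((γ : ℝ) - A) ∧
      (δ : ℝ) ^ n
        < (d : ℝ) ^ n +
            ((γ * ∑ i ∈ Finset.range n, δ ^ (n - 1 - i) * d ^ i : ℤ) : ℝ) *
              (((B : ℝ) - d) / ((γ : ℝ) - A)) := by
  intro n hn
  push_cast
  have hd' : (0 : ℝ) < d := by exact_mod_cast hd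
  have hS : 0 < ∑ i ∈ range n, (δ : ℝ) ^ (n - 1 - i) * (d : ℝ) ^ i :=
    sum_pow_mul_pow_pos (hd'.trans (by exact_mod_cast hδd)) hd' (by omega)
  have hγS : 0 < (γ : ℝ) * ∑ i ∈ range n, (δ : ℝ) ^ (n - 1 - i) * (d : ℝ) ^ i :=
    mul_pos (by exact_mod_cast hγ) hS
  have hslope_n : ((δ : ℝ) ^ n - d ^ n) / (γ * ∑ i ∈ range n, (δ : ℝ) ^ (n - 1 - i) * d ^ i)
      < (B - d) / (γ - A) := by
    rwa [pow_sub_pow_div_mul_sum _ _ _ hS.ne']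
  refine ⟨?_, hslope_n, ?_⟩
  · have hdn : (d : ℝ) ^ n = d * d ^ (n - 1) := by rw [← pow_succ', Nat.sub_add_cancel hn]
    rw [hdn, ← sub_mul, sub_sub_cancel, mul_div_mul_right _ _ (pow_pos hd' _).ne']
  · linarith [(div_lt_iff₀ hγS).mp hslope_n]

theorem stmt_18 (δ d γ A B : ℤ) (hd : 0 < d) (hδd : d < δ) (hγ : 0 < γ)
    (hA : 0 ≤ A) (hAγ : A < γ) (hB : d < B)
    (hslope : ((δ : ℝ) - d) / γ < ((B : ℝ) - d) / ((γ : ℝ) - A)) :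
    ∀ n : ℕ, 1 ≤ n →
      (((B * d ^ (n - 1) : ℤ) : ℝ) - (d : ℝ) ^ n) /
          (((γ * ∑ i ∈ Finset.range n, δ ^ (n - 1 - i) * d ^ i : ℤ) : ℝ) -
            (((γ * ∑ i ∈ Finset.range n, δ ^ (n - 1 - i) * d ^ i - (γ - A) * d ^ (n - 1) : ℤ)) : ℝ))
        = ((B : ℝ) - d) / ((γ : ℝ) - A) ∧
      ((δ : ℝ) ^ n - (d : ℝ) ^ n) / ((γ * ∑ i ∈ Finset.range n, δ ^ (n - 1 - i) * d ^ i : ℤ) : ℝ)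
        < ((B : ℝ) - d) / ((γ : ℝ) - A) ∧
      (δ : ℝ) ^ n
        < (d : ℝ) ^ n +
            ((γ * ∑ i ∈ Finset.range n, δ ^ (n - 1 - i) * d ^ i : ℤ) : ℝ) *
              (((B : ℝ) - d) / ((γ : ℝ) - A)) :=
  stmt_18_general δ d γ A B hd hδd hγ hslope
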